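/- Sufficient optimality condition (deterministic): Let A ∈ {0,1}^{n×n} be symmetric with a_{ii} = 1, let t ∈ (0,1), and let Y* be the cluster matrix of a partition of a subset V₁ of {1,…,n} into clusters of sizes k₁,…,k_r. Set λ = 1/(48√n), R = {(i,j) : y*_{ij} = 1}, 𝒜 = {(i,j) : a_{ij} = 1}, and let C be the orthogonal projection onto the column space of Y*. Suppose there exist a matrix W ∈ ℝ^{n×n} and a number ε ∈ (0,1) satisfying: (a) ‖W‖ ≤ 1; (b) ‖P_T(W)‖_∞ ≤ (ε/2)·λ·min{c_𝒜, c_{𝒜ᶜ}}; (c) (C + W)_{ij} = −(1+ε)·λ·c_{𝒜ᶜ} for all (i,j) ∈ R ∩ 𝒜ᶜ; w_{ij} = (1+ε)·λ·c_𝒜 for all (i,j) ∈ Rᶜ ∩ 𝒜; (C + W)_{ij} ≤ (1−ε)·λ·c_𝒜 for all (i,j) ∈ R ∩ 𝒜; and w_{ij} ≥ −(1−ε)·λ·c_{𝒜ᶜ} for all (i,j) ∈ Rᶜ ∩ 𝒜ᶜ. Then Y* is the unique maximizer of the objective F_A over the box {Y : 0 ≤ y_{ij} ≤ 1}. -/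

import Mathlib

/-!
The dual certificate yields a subgradient `Q = C + (1 - C) W (1 - C)` of the nuclear norm at `Y*`:
as `C` is an orthogonal projection fixing the columns of `Y*` and `‖W‖ ≤ 1`, we get `‖Q‖ ≤ 1` and
`tr (Qᵀ Y*) = tr Y* = ‖Y*‖_*`, so spectral/nuclear duality gives
`‖Y‖_* - ‖Y*‖_* ≥ ⟨Q, Y - Y*⟩`. Since `Q = C + W - P_T(W)`, conditions (b) and (c) say that every
entry of `λ ∇(linear part of F_A) - Q` has, with margin `δ = ε λ min (c_𝒜, c_{𝒜ᶜ}) / 2`, the sign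
opposite to the sign of `y_ij - y*_ij` that the box forces. Hence
`λ (F_A Y - F_A Y*) ≤ -δ ∑ |y_ij - y*_ij| < 0` for every other `Y` in the box.
-/

open MeasureTheory

/-- Nuclear norm: trace of the positive semidefinite square root of `Yᵀ Y`
(equivalently, the sum of the singular values of `Y`). -/
noncomputable def nuclearNorm {n : ℕ} (Y : Matrix (Fin n) (Fin n) ℝ) : ℝ :=
  ((Matrix.posSemidef_conjTranspose_mul_self Y).1.eigenvectorUnitary.1 *
    Matrix.diagonal ((RCLike.ofReal : ℝ → ℝ) ∘ (√·) ∘ (Matrix.posSemidef_conjTranspose_mul_self Y).1.eigenvalues) *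
    (star (Matrix.posSemidef_conjTranspose_mul_self Y).1.eigenvectorUnitary :
      Matrix (Fin n) (Fin n) ℝ)).trace

/-- The objective `F_A(Y) = c_𝒜 Σ_{a_ij=1} y_ij − c_{𝒜ᶜ} Σ_{a_ij=0} y_ij − 48√n ‖Y‖_*`
with `c_𝒜 = √((1−t)/t)` and `c_{𝒜ᶜ} = √(t/(1−t))`. -/
noncomputable def objective {n : ℕ} (A : Matrix (Fin n) (Fin n) ℝ) (t : ℝ)
    (Y : Matrix (Fin n) (Fin n) ℝ) : ℝ :=
  Real.sqrt ((1 - t) / t) * (∑ i, ∑ j, if A i j = 1 then Y i j else 0)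
    - Real.sqrt (t / (1 - t)) * (∑ i, ∑ j, if A i j = 0 then Y i j else 0)
    - 48 * Real.sqrt n * nuclearNorm Y

/-- The box `0 ≤ y_ij ≤ 1`. -/
def inBox {n : ℕ} (Y : Matrix (Fin n) (Fin n) ℝ) : Prop :=
  ∀ i j, 0 ≤ Y i j ∧ Y i j ≤ 1

/-- `Y0` is the unique maximizer of `F` over the box. -/
def isUniqueMaximizer {n : ℕ} (F : Matrix (Fin n) (Fin n) ℝ → ℝ)
    (Y0 : Matrix (Fin n) (Fin n) ℝ) : Prop :=
  inBox Y0 ∧ ∀ Y, inBox Y → Y ≠ Y0 → F Y < F Y0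


/-- Spectral norm (largest singular value), as operator norm on Euclidean space. -/
noncomputable def specNorm {n : ℕ} (W : Matrix (Fin n) (Fin n) ℝ) : ℝ :=
  ‖LinearMap.toContinuousLinearMap (Matrix.toEuclideanLin W)‖

/-- Entrywise maximum norm `‖M‖_∞ = max_{i,j} |m_ij|`. -/
noncomputable def maxAbs {n : ℕ} (M : Matrix (Fin n) (Fin n) ℝ) : ℝ :=
  ⨆ i, ⨆ j, |M i j|

open Matrix
open scoped InnerProductSpace

namespace IsStarProjection

variable {𝕜 E : Type*} [RCLike 𝕜] [NormedAddCommGroup E] [InnerProductSpace 𝕜 E] [CompleteSpace E]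
  {p : E →L[𝕜] E}

lemma inner_apply_one_sub_apply (hp : IsStarProjection p) (x y : E) :
    ⟪p x, (1 - p) y⟫_𝕜 = 0 := by
  rw [← ContinuousLinearMap.adjoint_inner_right, ← ContinuousLinearMap.star_eq_adjoint,
    hp.isSelfAdjoint.star_eq, ← mul_apply_eq_comp, hp.mul_one_sub_self, _root_.zero_apply,
    inner_zero_right]

lemma norm_sq_apply_add_norm_sq_one_sub_apply (hp : IsStarProjection p) (x : E) :
    ‖p x‖ ^ 2 + ‖(1 - p) x‖ ^ 2 = ‖x‖ ^ 2 := by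
  have h := norm_add_sq_eq_norm_sq_add_norm_sq_of_inner_eq_zero _ _
    (hp.inner_apply_one_sub_apply x x)
  simpa [sq] using h.symm

lemma norm_add_one_sub_mul_mul_one_sub_le_one (hp : IsStarProjection p) {w : E →L[𝕜] E}
    (hw : ‖w‖ ≤ 1) : ‖p + (1 - p) * w * (1 - p)‖ ≤ 1 := by
  refine ContinuousLinearMap.opNorm_le_bound _ zero_le_one fun x => ?_
  have hcompl : ‖(1 - p) (w ((1 - p) x))‖ ≤ ‖(1 - p) x‖ :=
    calc ‖(1 - p) (w ((1 - p) x))‖ ≤ ‖w ((1 - p) x)‖ :=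
          (ContinuousLinearMap.le_of_opNorm_le _ hp.one_sub.norm_le _).trans_eq (one_mul _)
      _ ≤ ‖(1 - p) x‖ := (ContinuousLinearMap.le_of_opNorm_le _ hw _).trans_eq (one_mul _)
  have hpyth := norm_add_sq_eq_norm_sq_add_norm_sq_of_inner_eq_zero _ _
    (hp.inner_apply_one_sub_apply x (w ((1 - p) x)))
  rw [one_mul, ← sq_le_sq₀ (norm_nonneg _) (norm_nonneg _),
    ← hp.norm_sq_apply_add_norm_sq_one_sub_apply x, _root_.add_apply, mul_apply_eq_comp,
    mul_apply_eq_comp, sq, sq, sq, hpyth]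
  gcongr

end IsStarProjection

section NuclearNorm

variable {n : ℕ}

lemma specNorm_eq_norm_toEuclideanCLM (M : Matrix (Fin n) (Fin n) ℝ) :
    specNorm M = ‖toEuclideanCLM (𝕜 := ℝ) M‖ := rfl

lemma specNorm_add_one_sub_mul_mul_one_sub_le_one {C W : Matrix (Fin n) (Fin n) ℝ}
    (hC : IsStarProjection C) (hW : specNorm W ≤ 1) :
    specNorm (C + (1 - C) * W * (1 - C)) ≤ 1 := by
  rw [specNorm_eq_norm_toEuclideanCLM, map_add, map_mul, map_mul, map_sub, map_one]
  exact (hC.map _).norm_add_one_sub_mul_mul_one_sub_le_one hW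

lemma trace_eq_sum_inner_toEuclideanCLM (M : Matrix (Fin n) (Fin n) ℝ)
    (b : OrthonormalBasis (Fin n) ℝ (EuclideanSpace ℝ (Fin n))) :
    M.trace = ∑ i, ⟪b i, toEuclideanCLM (𝕜 := ℝ) M (b i)⟫_ℝ :=
  (trace_toLin_eq M (EuclideanSpace.basisFun (Fin n) ℝ).toBasis).symm.trans
    (LinearMap.trace_eq_sum_inner _ b)

lemma norm_toEuclideanCLM_eigenvectorBasis (Y : Matrix (Fin n) (Fin n) ℝ) (i : Fin n) :
    ‖toEuclideanCLM (𝕜 := ℝ) Y ((posSemidef_conjTranspose_mul_self Y).1.eigenvectorBasis i)‖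
      = √((posSemidef_conjTranspose_mul_self Y).1.eigenvalues i) := by
  set hH := (posSemidef_conjTranspose_mul_self Y).1
  have hsq : ‖toEuclideanCLM (𝕜 := ℝ) Y (hH.eigenvectorBasis i)‖ ^ 2 = hH.eigenvalues i := by
    rw [← real_inner_self_eq_norm_sq, ← ContinuousLinearMap.adjoint_inner_right,
      ← ContinuousLinearMap.star_eq_adjoint, ← map_star, ← mul_apply_eq_comp, ← map_mul,
      hH.eigenvalues_eq]
    simp [EuclideanSpace.inner_eq_star_dotProduct, dotProduct_comm, star_eq_conjTranspose]
  rw [← hsq, Real.sqrt_sq (norm_nonneg _)]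

lemma nuclearNorm_eq_sum_sqrt_eigenvalues (Y : Matrix (Fin n) (Fin n) ℝ) :
    nuclearNorm Y = ∑ i, √((posSemidef_conjTranspose_mul_self Y).1.eigenvalues i) := by
  rw [nuclearNorm, trace_mul_cycle, Unitary.coe_star_mul_self, one_mul, trace_diagonal]
  rfl

lemma nuclearNorm_nonneg (Y : Matrix (Fin n) (Fin n) ℝ) : 0 ≤ nuclearNorm Y := by
  rw [nuclearNorm_eq_sum_sqrt_eigenvalues]
  positivity

open scoped MatrixOrder in
lemma Matrix.PosSemidef.nuclearNorm_eq_trace {Y : Matrix (Fin n) (Fin n) ℝ} (hY : Y.PosSemidef) :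
    nuclearNorm Y = Y.trace := by
  have hsqrt : cfc Real.sqrt (Yᴴ * Y) = Y := by
    rw [← cfcₙ_eq_cfc (hf0 := Real.sqrt_zero),
      ← CFC.sqrt_eq_real_sqrt _ (posSemidef_conjTranspose_mul_self Y).nonneg,
      hY.isHermitian.eq, CFC.sqrt_mul_self Y hY.nonneg]
  rw [← congrArg trace hsqrt, (posSemidef_conjTranspose_mul_self Y).1.cfc_eq]
  rfl

lemma trace_transpose_mul_le_specNorm_mul_nuclearNorm (Q Y : Matrix (Fin n) (Fin n) ℝ) :
    (Qᵀ * Y).trace ≤ specNorm Q * nuclearNorm Y := by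
  set b := (posSemidef_conjTranspose_mul_self Y).1.eigenvectorBasis
  rw [trace_eq_sum_inner_toEuclideanCLM _ b, nuclearNorm_eq_sum_sqrt_eigenvalues, Finset.mul_sum]
  gcongr with i
  rw [← norm_toEuclideanCLM_eigenvectorBasis, ← conjTranspose_eq_transpose_of_trivial,
    ← star_eq_conjTranspose, map_mul, mul_apply_eq_comp, map_star,
    ContinuousLinearMap.star_eq_adjoint, ContinuousLinearMap.adjoint_inner_right]
  calc _ ≤ ‖toEuclideanCLM (𝕜 := ℝ) Q (b i)‖ * ‖toEuclideanCLM (𝕜 := ℝ) Y (b i)‖ :=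
        real_inner_le_norm _ _
    _ ≤ specNorm Q * ‖toEuclideanCLM (𝕜 := ℝ) Y (b i)‖ := by
      gcongr
      simpa [b.orthonormal.1 i, specNorm_eq_norm_toEuclideanCLM] using
        (toEuclideanCLM (𝕜 := ℝ) Q).le_opNorm (b i)

lemma trace_transpose_mul_sub_le_nuclearNorm_sub {C W Y₀ : Matrix (Fin n) (Fin n) ℝ}
    (hC : IsStarProjection C) (hCY : C * Y₀ = Y₀) (hY₀ : Y₀.PosSemidef) (hW : specNorm W ≤ 1)
    (Y : Matrix (Fin n) (Fin n) ℝ) :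
    ((C + (1 - C) * W * (1 - C))ᵀ * (Y - Y₀)).trace ≤ nuclearNorm Y - nuclearNorm Y₀ := by
  set Q := C + (1 - C) * W * (1 - C)
  have hCT : Cᵀ = C := by
    simpa [star_eq_conjTranspose, conjTranspose_eq_transpose_of_trivial] using
      hC.isSelfAdjoint.star_eq
  have hQY₀ : Qᵀ * Y₀ = Y₀ := by
    have hcompl : (1 - C) * Y₀ = 0 := by rw [sub_mul, one_mul, hCY, sub_self]
    simp only [Q, transpose_add, transpose_mul, transpose_sub, transpose_one, hCT, add_mul,
      hCY, Matrix.mul_assoc, hcompl, Matrix.mul_zero, add_zero]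
  have hQY : (Qᵀ * Y).trace ≤ nuclearNorm Y :=
    (trace_transpose_mul_le_specNorm_mul_nuclearNorm Q Y).trans
      (mul_le_of_le_one_left (nuclearNorm_nonneg Y)
        (specNorm_add_one_sub_mul_mul_one_sub_le_one hC hW))
  rw [Matrix.mul_sub, trace_sub, hQY₀, hY₀.nuclearNorm_eq_trace]
  linarith

end NuclearNorm

section ClusterMatrix

variable {ι κ : Type*}

lemma mul_diagonal_inv_mul_transpose_mul_self [Fintype ι] [Fintype κ] [DecidableEq κ]
    {X : Matrix ι κ ℝ} {k : κ → ℝ} (hX : Xᵀ * X = diagonal k) (hk : ∀ m, k m ≠ 0) :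
    X * diagonal k⁻¹ * Xᵀ * X = X := by
  rw [Matrix.mul_assoc, hX, Matrix.mul_assoc, diagonal_mul_diagonal]
  convert Matrix.mul_one X
  exact diagonal_eq_one.mpr (funext fun m => inv_mul_cancel₀ (hk m))

lemma isStarProjection_mul_diagonal_inv_mul_transpose [Fintype ι] [Fintype κ] [DecidableEq κ]
    {X : Matrix ι κ ℝ} {k : κ → ℝ} (hX : Xᵀ * X = diagonal k) (hk : ∀ m, k m ≠ 0) :
    IsStarProjection (X * diagonal k⁻¹ * Xᵀ) := by
  refine ⟨?_, ?_⟩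
  · simp only [IsIdempotentElem, ← Matrix.mul_assoc,
      mul_diagonal_inv_mul_transpose_mul_self hX hk]
  · simp [IsSelfAdjoint, star_eq_conjTranspose, conjTranspose_eq_transpose_of_trivial,
      Matrix.mul_assoc]

variable [DecidableEq ι]

def clusterIncidence (S : κ → Finset ι) : Matrix ι κ ℝ :=
  of fun i m => if i ∈ S m then 1 else 0

lemma transpose_clusterIncidence_mul_self [Fintype ι] [DecidableEq κ] {S : κ → Finset ι}
    (hS : Pairwise fun m m' => Disjoint (S m) (S m')) :
    (clusterIncidence S)ᵀ * clusterIncidence S = diagonal fun m => ((S m).card : ℝ) := by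
  ext m m'
  rcases eq_or_ne m m' with rfl | hm
  · simp [clusterIncidence, mul_apply, Finset.sum_ite_mem]
  · simp only [clusterIncidence, mul_apply, transpose_apply, of_apply, diagonal_apply_ne _ hm]
    refine Finset.sum_eq_zero fun i _ => ?_
    by_cases hi : i ∈ S m
    · simp [hi, Finset.disjoint_left.mp (hS hm) hi]
    · simp [hi]

lemma clusterIncidence_mul_transpose_apply [Fintype κ] {S : κ → Finset ι}
    (hS : Pairwise fun m m' => Disjoint (S m) (S m')) (i j : ι)
    [Decidable (∃ m, i ∈ S m ∧ j ∈ S m)] :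
    (clusterIncidence S * (clusterIncidence S)ᵀ) i j =
      if ∃ m, i ∈ S m ∧ j ∈ S m then 1 else 0 := by
  simp only [clusterIncidence, mul_apply, transpose_apply, of_apply, mul_ite, mul_one, mul_zero]
  split_ifs with h
  · obtain ⟨m, hi, hj⟩ := h
    rw [Finset.sum_eq_single m]
    · simp [hi, hj]
    · intro m' _ hm'
      simp [Finset.disjoint_left.mp (hS hm').symm hi]
    · simp
  · push Not at h
    exact Finset.sum_eq_zero fun m _ => by by_cases hi : i ∈ S m <;> simp [hi, h m]

lemma clusterIncidence_mul_diagonal_mul_transpose_apply [Fintype κ] [DecidableEq κ]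
    (S : κ → Finset ι) (d : κ → ℝ) (i j : ι) :
    (clusterIncidence S * diagonal d * (clusterIncidence S)ᵀ) i j =
      ∑ m, if i ∈ S m ∧ j ∈ S m then d m else 0 := by
  simp only [clusterIncidence, mul_apply, transpose_apply, of_apply, diagonal_apply, mul_ite,
    mul_zero, ite_mul, zero_mul, mul_one, one_mul, Finset.sum_ite_eq', Finset.mem_univ, if_true]
  refine Finset.sum_congr rfl fun m _ => ?_
  split_ifs <;> simp_all

lemma trace_transpose_mul_sub_clusterMatrix_le {n r : ℕ} {S : Fin r → Finset (Fin n)}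
    (hS : Pairwise fun m m' => Disjoint (S m) (S m')) (hSne : ∀ m, (S m).Nonempty)
    {Y₀ C W : Matrix (Fin n) (Fin n) ℝ}
    (hY₀ : ∀ i j, Y₀ i j = if ∃ m, i ∈ S m ∧ j ∈ S m then 1 else 0)
    (hC : ∀ i j, C i j = ∑ m, if i ∈ S m ∧ j ∈ S m then ((S m).card : ℝ)⁻¹ else 0)
    (hW : specNorm W ≤ 1) (Y : Matrix (Fin n) (Fin n) ℝ) :
    ((C + (1 - C) * W * (1 - C))ᵀ * (Y - Y₀)).trace ≤ nuclearNorm Y - nuclearNorm Y₀ := by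
  set X := clusterIncidence S
  have hgram := transpose_clusterIncidence_mul_self hS
  have hcard : ∀ m, ((S m).card : ℝ) ≠ 0 := fun m => by exact_mod_cast (hSne m).card_pos.ne'
  have hYX : Y₀ = X * Xᵀ := by
    ext i j
    rw [hY₀, clusterIncidence_mul_transpose_apply hS]
  have hCX : C = X * diagonal (fun m => ((S m).card : ℝ))⁻¹ * Xᵀ := by
    ext i j
    rw [hC, clusterIncidence_mul_diagonal_mul_transpose_apply]
    rfl
  refine trace_transpose_mul_sub_le_nuclearNorm_sub
    (hCX ▸ isStarProjection_mul_diagonal_inv_mul_transpose hgram hcard) ?_ ?_ hW Y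
  · rw [hCX, hYX, ← Matrix.mul_assoc, mul_diagonal_inv_mul_transpose_mul_self hgram hcard]
  · simpa [hYX, conjTranspose_eq_transpose_of_trivial] using posSemidef_self_mul_conjTranspose X

end ClusterMatrix

section Objective

variable {n : ℕ}

noncomputable def objectiveWeight (A : Matrix (Fin n) (Fin n) ℝ) (t : ℝ) :
    Matrix (Fin n) (Fin n) ℝ :=
  of fun i j => if A i j = 1 then √((1 - t) / t) else if A i j = 0 then -√(t / (1 - t)) else 0

lemma objective_eq (A : Matrix (Fin n) (Fin n) ℝ) (t : ℝ) (Y : Matrix (Fin n) (Fin n) ℝ) :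
    objective A t Y = ∑ i, ∑ j, objectiveWeight A t i j * Y i j - 48 * √n * nuclearNorm Y := by
  simp only [objective, objectiveWeight, of_apply, Finset.mul_sum, ← Finset.sum_sub_distrib]
  congr 1
  refine Finset.sum_congr rfl fun i _ => Finset.sum_congr rfl fun j _ => ?_
  split_ifs <;> simp_all

lemma trace_transpose_mul_eq_sum (Q D : Matrix (Fin n) (Fin n) ℝ) :
    (Qᵀ * D).trace = ∑ i, ∑ j, Q i j * D i j := by
  simp only [trace, Matrix.diag_apply, mul_apply, transpose_apply]
  exact Finset.sum_comm

lemma sum_sum_neg_of_le_neg_mul_abs {f D : Matrix (Fin n) (Fin n) ℝ} {δ : ℝ} (hδ : 0 < δ)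
    (hD : D ≠ 0) (h : ∀ i j, f i j ≤ -(δ * |D i j|)) : ∑ i, ∑ j, f i j < 0 := by
  have hf : ∀ i j, f i j ≤ 0 := fun i j => (h i j).trans (by nlinarith [abs_nonneg (D i j)])
  obtain ⟨i, j, hij⟩ : ∃ i j, D i j ≠ 0 := by
    by_contra! h0
    exact hD (Matrix.ext h0)
  have hfij : f i j < 0 := (h i j).trans_lt (by nlinarith [abs_pos.mpr hij])
  refine Finset.sum_neg' (fun i _ => Finset.sum_nonpos fun j _ => hf i j)
    ⟨i, Finset.mem_univ _, ?_⟩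
  exact Finset.sum_neg' (fun j _ => hf i j) ⟨j, Finset.mem_univ _, hfij⟩

lemma objective_lt_of_entrywise (hn : 0 < n) {A Y Y₀ Q : Matrix (Fin n) (Fin n) ℝ} {t δ : ℝ}
    (hδ : 0 < δ) (hne : Y ≠ Y₀)
    (hQ : (Qᵀ * (Y - Y₀)).trace ≤ nuclearNorm Y - nuclearNorm Y₀)
    (hentry : ∀ i j, (1 / (48 * √n) * objectiveWeight A t i j - Q i j) * (Y - Y₀) i j ≤
      -(δ * |(Y - Y₀) i j|)) :
    objective A t Y < objective A t Y₀ := by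
  set s := 48 * √(n : ℝ)
  set G := objectiveWeight A t
  set D := Y - Y₀
  have hs : 0 < s := by positivity
  have hsum : 1 / s * ∑ i, ∑ j, G i j * D i j - ∑ i, ∑ j, Q i j * D i j < 0 := by
    have := sum_sum_neg_of_le_neg_mul_abs hδ (sub_ne_zero.mpr hne) hentry
    simpa only [sub_mul, mul_assoc, Finset.sum_sub_distrib, Finset.mul_sum] using this
  rw [trace_transpose_mul_eq_sum] at hQ
  rw [← sub_neg]
  calc objective A t Y - objective A t Y₀
      = ∑ i, ∑ j, G i j * D i j - s * (nuclearNorm Y - nuclearNorm Y₀) := by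
        simp only [objective_eq, D, Matrix.sub_apply, mul_sub, Finset.sum_sub_distrib]
        ring
    _ ≤ ∑ i, ∑ j, G i j * D i j - s * ∑ i, ∑ j, Q i j * D i j := by gcongr
    _ = s * (1 / s * ∑ i, ∑ j, G i j * D i j - ∑ i, ∑ j, Q i j * D i j) := by
        field_simp
    _ < 0 := mul_neg_of_pos_of_neg hs hsum

end Objective

lemma sub_mul_le_neg_mul_abs {g q d δ : ℝ}
    (h : (0 ≤ d ∧ g + δ ≤ q) ∨ (d ≤ 0 ∧ q ≤ g - δ)) : (g - q) * d ≤ -(δ * |d|) := by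
  rcases h with ⟨hd, hq⟩ | ⟨hd, hq⟩
  · rw [abs_of_nonneg hd]; nlinarith
  · rw [abs_of_nonpos hd]; nlinarith

lemma certificate_entry_le {a cA cB μ ε y y₀ c w p : ℝ} (hμ : 0 ≤ μ) (hε : 0 ≤ ε)
    (ha : a = 0 ∨ a = 1) (hy₀ : y₀ = 0 ∨ y₀ = 1) (hy : 0 ≤ y ∧ y ≤ 1) (hc : y₀ = 0 → c = 0)
    (hp : |p| ≤ ε / 2 * μ * min cA cB)
    (h₁ : y₀ = 1 → a = 0 → c + w = -((1 + ε) * μ * cB))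
    (h₂ : y₀ = 0 → a = 1 → w = (1 + ε) * μ * cA)
    (h₃ : y₀ = 1 → a = 1 → c + w ≤ (1 - ε) * μ * cA)
    (h₄ : y₀ = 0 → a = 0 → w ≥ -((1 - ε) * μ * cB)) :
    (μ * (if a = 1 then cA else if a = 0 then -cB else 0) - (c + w - p)) * (y - y₀) ≤
      -(ε / 2 * μ * min cA cB * |y - y₀|) := by
  apply sub_mul_le_neg_mul_abs
  have hp' := abs_le.mp hp
  have hA : ε * μ * min cA cB ≤ ε * μ * cA := by gcongr; exact min_le_left _ _
  have hB : ε * μ * min cA cB ≤ ε * μ * cB := by gcongr; exact min_le_right _ _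
  rcases hy₀ with rfl | rfl <;> rcases ha with rfl | rfl <;> norm_num
  · exact Or.inl ⟨hy.1, by linarith [h₄ rfl rfl, hc rfl]⟩
  · exact Or.inl ⟨hy.1, by linarith [h₂ rfl rfl, hc rfl]⟩
  · exact Or.inr ⟨hy.2, by linarith [h₁ rfl rfl]⟩
  · exact Or.inr ⟨hy.2, by linarith [h₃ rfl rfl]⟩

lemma le_maxAbs {n : ℕ} (M : Matrix (Fin n) (Fin n) ℝ) (i j : Fin n) : |M i j| ≤ maxAbs M :=
  (le_ciSup (Set.finite_range _).bddAbove j).trans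
    (le_ciSup (f := fun i => ⨆ j, |M i j|) (Set.finite_range _).bddAbove i)

theorem optimality_condition_general {n r : ℕ} (A : Matrix (Fin n) (Fin n) ℝ) (t : ℝ)
    (ht0 : 0 < t) (ht1 : t < 1)
    (hA01 : ∀ i j, A i j = 0 ∨ A i j = 1)
    -- the partition of V₁ into clusters S 0, …, S (r−1)
    (S : Fin r → Finset (Fin n)) (hSne : ∀ m, (S m).Nonempty)
    (hSdisj : ∀ m m', m ≠ m' → Disjoint (S m) (S m'))
    -- Y* : the cluster matrix of the partition
    (Ystar : Matrix (Fin n) (Fin n) ℝ)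
    (hYstar : ∀ i j, Ystar i j = if ∃ m, i ∈ S m ∧ j ∈ S m then 1 else 0)
    -- C : the orthogonal projection onto the column space of Y*
    (C : Matrix (Fin n) (Fin n) ℝ)
    (hC : ∀ i j, C i j = ∑ m, if i ∈ S m ∧ j ∈ S m then ((S m).card : ℝ)⁻¹ else 0)
    (W : Matrix (Fin n) (Fin n) ℝ) (ε : ℝ) (hε0 : 0 < ε)
    -- (a) spectral norm bound
    (ha : specNorm W ≤ 1)
    -- (b) entrywise bound on the tangent-space projection of W
    (hb : maxAbs (C * W + W * C - C * W * C) ≤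
      ε / 2 * (1 / (48 * Real.sqrt n)) *
        min (Real.sqrt ((1 - t) / t)) (Real.sqrt (t / (1 - t))))
    -- (c) elementwise conditions
    (hc1 : ∀ i j, Ystar i j = 1 → A i j = 0 →
      (C + W) i j = -((1 + ε) * (1 / (48 * Real.sqrt n)) * Real.sqrt (t / (1 - t))))
    (hc2 : ∀ i j, Ystar i j = 0 → A i j = 1 →
      W i j = (1 + ε) * (1 / (48 * Real.sqrt n)) * Real.sqrt ((1 - t) / t))
    (hc3 : ∀ i j, Ystar i j = 1 → A i j = 1 →
      (C + W) i j ≤ (1 - ε) * (1 / (48 * Real.sqrt n)) * Real.sqrt ((1 - t) / t))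
    (hc4 : ∀ i j, Ystar i j = 0 → A i j = 0 →
      W i j ≥ -((1 - ε) * (1 / (48 * Real.sqrt n)) * Real.sqrt (t / (1 - t)))) :
    isUniqueMaximizer (objective A t) Ystar := by
  rcases Nat.eq_zero_or_pos n with rfl | hn
  · exact ⟨fun i => i.elim0, fun Y _ hne => (hne (Subsingleton.elim _ _)).elim⟩
  have hY01 : ∀ i j, Ystar i j = 0 ∨ Ystar i j = 1 := fun i j => by
    rw [hYstar]; split_ifs <;> simp
  have hC0 : ∀ i j, Ystar i j = 0 → C i j = 0 := fun i j h => by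
    rw [hYstar, ite_eq_right_iff] at h
    exact (hC i j).trans (Finset.sum_eq_zero fun m _ => if_neg fun hm => one_ne_zero (h ⟨m, hm⟩))
  have hmin : 0 < min √((1 - t) / t) √(t / (1 - t)) :=
    lt_min (Real.sqrt_pos.2 (div_pos (sub_pos.2 ht1) ht0))
      (Real.sqrt_pos.2 (div_pos ht0 (sub_pos.2 ht1)))
  refine ⟨fun i j => by rcases hY01 i j with h | h <;> rw [h] <;> norm_num, fun Y hY hne => ?_⟩
  refine objective_lt_of_entrywise hn (Q := C + (1 - C) * W * (1 - C))
    (δ := ε / 2 * (1 / (48 * √n)) * min √((1 - t) / t) √(t / (1 - t))) (by positivity) hne ?_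
    fun i j => ?_
  · exact trace_transpose_mul_sub_clusterMatrix_le (fun m m' => hSdisj m m') hSne hYstar hC ha Y
  · rw [show C + (1 - C) * W * (1 - C) = C + W - (C * W + W * C - C * W * C) by noncomm_ring]
    exact certificate_entry_le (by positivity) hε0.le (hA01 i j) (hY01 i j) (hY i j) (hC0 i j)
      ((le_maxAbs _ i j).trans hb) (hc1 i j) (hc2 i j) (hc3 i j) (hc4 i j)

/-- **Sufficient optimality condition (deterministic).** Given a dual certificate `W`
satisfying the approximate stationarity conditions (a)–(c), the cluster matrix `Y*` of the
partition `S` is the unique maximizer of `F_A` over the box. -/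
theorem optimality_condition {n r : ℕ} (A : Matrix (Fin n) (Fin n) ℝ) (t : ℝ)
    (ht0 : 0 < t) (ht1 : t < 1)
    (hA01 : ∀ i j, A i j = 0 ∨ A i j = 1) (hAsymm : A.IsSymm) (hAdiag : ∀ i, A i i = 1)
    -- the partition of V₁ into clusters S 0, …, S (r−1)
    (S : Fin r → Finset (Fin n)) (hSne : ∀ m, (S m).Nonempty)
    (hSdisj : ∀ m m', m ≠ m' → Disjoint (S m) (S m'))
    -- Y* : the cluster matrix of the partition
    (Ystar : Matrix (Fin n) (Fin n) ℝ)
    (hYstar : ∀ i j, Ystar i j = if ∃ m, i ∈ S m ∧ j ∈ S m then 1 else 0)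
    -- C : the orthogonal projection onto the column space of Y*
    (C : Matrix (Fin n) (Fin n) ℝ)
    (hC : ∀ i j, C i j = ∑ m, if i ∈ S m ∧ j ∈ S m then ((S m).card : ℝ)⁻¹ else 0)
    (W : Matrix (Fin n) (Fin n) ℝ) (ε : ℝ) (hε0 : 0 < ε) (hε1 : ε < 1)
    -- (a) spectral norm bound
    (ha : specNorm W ≤ 1)
    -- (b) entrywise bound on the tangent-space projection of W
    (hb : maxAbs (C * W + W * C - C * W * C) ≤
      ε / 2 * (1 / (48 * Real.sqrt n)) *
        min (Real.sqrt ((1 - t) / t)) (Real.sqrt (t / (1 - t))))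
    -- (c) elementwise conditions
    (hc1 : ∀ i j, Ystar i j = 1 → A i j = 0 →
      (C + W) i j = -((1 + ε) * (1 / (48 * Real.sqrt n)) * Real.sqrt (t / (1 - t))))
    (hc2 : ∀ i j, Ystar i j = 0 → A i j = 1 →
      W i j = (1 + ε) * (1 / (48 * Real.sqrt n)) * Real.sqrt ((1 - t) / t))
    (hc3 : ∀ i j, Ystar i j = 1 → A i j = 1 →
      (C + W) i j ≤ (1 - ε) * (1 / (48 * Real.sqrt n)) * Real.sqrt ((1 - t) / t))
    (hc4 : ∀ i j, Ystar i j = 0 → A i j = 0 →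
      W i j ≥ -((1 - ε) * (1 / (48 * Real.sqrt n)) * Real.sqrt (t / (1 - t)))) :
    isUniqueMaximizer (objective A t) Ystar :=
  optimality_condition_general A t ht0 ht1 hA01 S hSne hSdisj Ystar hYstar C hC W ε hε0 ha hb hc1
    hc2 hc3 hc4
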